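/- arXiv:2403.00750 — 2 statements merged into one kernel-verified Lean document; each statement's English description precedes it below -/
import Mathlib

section
/- Let G be a finite simple graph of order n >= 3 with rho_e^o(G) = 2, and let e be any edge of G. Then 1 <= rho_e^o(G - e) <= 3, where G - e denotes the graph obtained from G by deleting the edge e. -/
open scoped Classical

variable {V : Type*}

/-- Two edges `e₁, e₂` have a common edge in `G` if some edge of `G`, different from both,
joins an endvertex of `e₁` to an endvertex of `e₂`. -/
def HasCommonEdge (G : SimpleGraph V) (e₁ e₂ : Sym2 V) : Prop :=
  ∃ x y : V, x ∈ e₁ ∧ y ∈ e₂ ∧ G.Adj x y ∧ s(x, y) ≠ e₁ ∧ s(x, y) ≠ e₂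

/-- `B` is an edge open packing set of `G`: a set of edges of `G` no two distinct members
of which have a common edge in `G`. -/
def IsEOP (G : SimpleGraph V) (B : Set (Sym2 V)) : Prop :=
  B ⊆ G.edgeSet ∧ ∀ e₁ ∈ B, ∀ e₂ ∈ B, e₁ ≠ e₂ → ¬ HasCommonEdge G e₁ e₂

/-- The edge open packing number of `G`: the maximum cardinality of an EOP set of `G`. -/
noncomputable def eopNum (G : SimpleGraph V) : ℕ :=
  sSup {n | ∃ B : Set (Sym2 V), IsEOP G B ∧ B.ncard = n}

lemma eop_bdd [Fintype V] (G : SimpleGraph V) :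
    BddAbove {n | ∃ B : Set (Sym2 V), IsEOP G B ∧ B.ncard = n} := by
  classical
  refine ⟨Fintype.card (Sym2 V), ?_⟩
  rintro n ⟨B, _, rfl⟩
  simpa [Set.ncard_univ] using Set.ncard_le_ncard (Set.subset_univ B) Set.finite_univ

lemma eop_nonempty (G : SimpleGraph V) :
    {n | ∃ B : Set (Sym2 V), IsEOP G B ∧ B.ncard = n}.Nonempty :=
  ⟨0, ∅, ⟨Set.empty_subset _, fun e1 h1 => absurd h1 (Set.notMem_empty _)⟩,
    Set.ncard_empty _⟩

lemma card_le_eop [Fintype V] {G : SimpleGraph V} {B : Set (Sym2 V)} (h : IsEOP G B) :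
    B.ncard ≤ eopNum G :=
  le_csSup (eop_bdd G) ⟨B, h, rfl⟩

lemma exists_eop [Fintype V] (G : SimpleGraph V) :
    ∃ B : Set (Sym2 V), IsEOP G B ∧ B.ncard = eopNum G :=
  Nat.sSup_mem (eop_nonempty G) (eop_bdd G)

/-- Members of an EOP of `G - s(a,b)` that avoid `a` form an EOP of `G`. -/
lemma side_eop {G : SimpleGraph V} {a b : V} {B : Set (Sym2 V)}
    (hB : IsEOP (G.deleteEdges {s(a, b)}) B) :
    IsEOP G {f ∈ B | a ∉ f} := by
  constructor
  · intro f hf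
    have := hB.1 hf.1
    rw [SimpleGraph.edgeSet_deleteEdges] at this
    exact this.1
  · rintro f1 ⟨hf1, ha1⟩ f2 ⟨hf2, ha2⟩ hne ⟨x, y, hx, hy, hadj, h1, h2⟩
    by_cases hxy : s(x, y) = s(a, b)
    · rw [Sym2.eq_iff] at hxy
      rcases hxy with ⟨rfl, rfl⟩ | ⟨rfl, rfl⟩
      · exact ha1 hx
      · exact ha2 hy
    · exact hB.2 f1 hf1 f2 hf2 hne
        ⟨x, y, hx, hy, by rw [SimpleGraph.deleteEdges_adj]; exact ⟨hadj, by simpa using hxy⟩,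
          h1, h2⟩

theorem stmt6 [Fintype V] (G : SimpleGraph V) (hn : 3 ≤ Fintype.card V)
    (h2 : eopNum G = 2) (e : Sym2 V) (he : e ∈ G.edgeSet) :
    1 ≤ eopNum (G.deleteEdges {e}) ∧ eopNum (G.deleteEdges {e}) ≤ 3 := by
  classical
  induction e using Sym2.ind with
  | _ a b =>
  rw [SimpleGraph.mem_edgeSet] at he
  set G' := G.deleteEdges {s(a, b)} with hG'
  have hle2 : ∀ C : Set (Sym2 V), IsEOP G C → C.ncard ≤ 2 := fun C hC => h2 ▸ card_le_eop hC
  constructor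
  · -- lower bound
    obtain ⟨B, hB, hcard⟩ := exists_eop G
    rw [h2] at hcard
    obtain ⟨f1, f2, hf12, rfl⟩ := Set.ncard_eq_two.mp hcard
    have hex : ∃ f ∈ ({f1, f2} : Set (Sym2 V)), f ≠ s(a, b) := by
      by_contra h
      push_neg at h
      exact hf12 ((h f1 (by simp)).trans (h f2 (by simp)).symm)
    obtain ⟨f, hfB, hfne⟩ := hex
    have hfG' : f ∈ G'.edgeSet := by
      rw [hG', SimpleGraph.edgeSet_deleteEdges]
      exact ⟨hB.1 hfB, by simpa using hfne⟩
    have h1 : IsEOP G' {f} := by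
      constructor
      · simpa using hfG'
      · intro e1 he1 e2 he2 hne
        rw [Set.mem_singleton_iff] at he1 he2
        exact absurd (he1.trans he2.symm) hne
    calc (1 : ℕ) = ({f} : Set (Sym2 V)).ncard := (Set.ncard_singleton f).symm
    _ ≤ eopNum G' := card_le_eop h1
  · -- upper bound
    apply csSup_le (eop_nonempty G')
    rintro n ⟨B, hB, rfl⟩
    by_contra hlt
    push_neg at hlt
    -- hlt : 3 < B.ncard
    have hBE : ∀ f ∈ B, f ∈ G.edgeSet ∧ f ≠ s(a, b) := by
      intro f hf
      have := hB.1 hf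
      rw [hG', SimpleGraph.edgeSet_deleteEdges] at this
      exact ⟨this.1, by simpa using this.2⟩
    set S1 : Set (Sym2 V) := {f ∈ B | a ∉ f} with hS1def
    set S2 : Set (Sym2 V) := {f ∈ B | b ∉ f} with hS2def
    have hS1 : IsEOP G S1 := side_eop hB
    have hS2 : IsEOP G S2 := by
      have hB' : IsEOP (G.deleteEdges {s(b, a)}) B := by rwa [Sym2.eq_swap]
      exact side_eop hB'
    have hcover : B = S1 ∪ S2 := by
      ext f
      constructor
      · intro hf
        by_contra hcon
        simp only [Set.mem_union, hS1def, hS2def, Set.mem_setOf_eq, not_or, not_and,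
          not_not] at hcon
        have haf : a ∈ f := hcon.1 hf
        have hbf : b ∈ f := hcon.2 hf
        exact (hBE f hf).2 ((Sym2.mem_and_mem_iff he.ne).mp ⟨haf, hbf⟩)
      · rintro (hf | hf) <;> exact hf.1
    have hfin1 : S1.Finite := Set.toFinite _
    have hfin2 : S2.Finite := Set.toFinite _
    have hie := Set.ncard_union_add_ncard_inter S1 S2 hfin1 hfin2
    have hub : B.ncard ≤ S1.ncard + S2.ncard := by
      rw [hcover]
      exact Set.ncard_union_le _ _
    have hc1 : S1.ncard ≤ 2 := hle2 _ hS1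
    have hc2 : S2.ncard ≤ 2 := hle2 _ hS2
    have hc1e : S1.ncard = 2 := by omega
    have hc2e : S2.ncard = 2 := by omega
    have hint : (S1 ∩ S2).ncard = 0 := by
      rw [hcover] at hlt
      omega
    have hdisj : S1 ∩ S2 = ∅ := by
      rwa [Set.ncard_eq_zero (hfin1.inter_of_left _)] at hint
    have haS2 : ∀ f ∈ S2, a ∈ f := by
      intro f hf
      by_contra h
      have : f ∈ S1 ∩ S2 := ⟨⟨hf.1, h⟩, hf⟩
      rw [hdisj] at this
      exact this
    have hbS1 : ∀ f ∈ S1, b ∈ f := by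
      intro f hf
      by_contra h
      have : f ∈ S1 ∩ S2 := ⟨hf, ⟨hf.1, h⟩⟩
      rw [hdisj] at this
      exact this
    have hdisj' : ∀ f ∈ S1, ∀ g ∈ S2, f ≠ g := by
      intro f hf g hg h
      have : f ∈ S1 ∩ S2 := ⟨hf, h ▸ hg⟩
      rw [hdisj] at this
      exact this
    obtain ⟨f1, f2, hf12, hS2eq⟩ := Set.ncard_eq_two.mp hc2e
    obtain ⟨f3, f4, hf34, hS1eq⟩ := Set.ncard_eq_two.mp hc1e
    have hf1S2 : f1 ∈ S2 := by rw [hS2eq]; simp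
    have hf2S2 : f2 ∈ S2 := by rw [hS2eq]; simp
    have hf3S1 : f3 ∈ S1 := by rw [hS1eq]; simp
    have hf4S1 : f4 ∈ S1 := by rw [hS1eq]; simp
    obtain ⟨u1, hf1⟩ := Sym2.mem_iff_exists.mp (haS2 f1 hf1S2)
    obtain ⟨u2, hf2⟩ := Sym2.mem_iff_exists.mp (haS2 f2 hf2S2)
    -- basic distinctness
    have hadj1 : G'.Adj a u1 := by
      rw [← SimpleGraph.mem_edgeSet, ← hf1]; exact hB.1 hf1S2.1
    have hadj2 : G'.Adj a u2 := by
      rw [← SimpleGraph.mem_edgeSet, ← hf2]; exact hB.1 hf2S2.1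
    have hu1a : u1 ≠ a := fun h => G'.irrefl (h ▸ hadj1)
    have hu2a : u2 ≠ a := fun h => G'.irrefl (h ▸ hadj2)
    have hu1b : u1 ≠ b := by
      intro h
      exact hf1S2.2 (by rw [hf1, h]; simp)
    have hu2b : u2 ≠ b := by
      intro h
      exact hf2S2.2 (by rw [hf2, h]; simp)
    have hu12 : u1 ≠ u2 := by
      intro h
      exact hf12 (by rw [hf1, hf2, h])
    -- u1, u2 are not members of f3, f4
    have hnotmem : ∀ (fA fA' fB' : Sym2 V) (u : V), fA ∈ S2 → fA' ∈ S2 → fB' ∈ S1 →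
        fA = s(a, u) → fA ≠ fA' → u ∉ fB' := by
      intro fA fA' fB' u hA hA' hB1 hfA hne hu
      have hadj : G'.Adj a u := by
        rw [← SimpleGraph.mem_edgeSet, ← hfA]; exact hB.1 hA.1
      refine hB.2 fA' hA'.1 fB' hB1.1 (hdisj' _ hB1 _ hA').symm
        ⟨a, u, haS2 _ hA', hu, hadj, ?_, ?_⟩
      · rw [← hfA]; exact hne
      · intro hcon
        exact hB1.2 (hcon ▸ (Sym2.mem_mk_left a u))
    have hu1f3 : u1 ∉ f3 := hnotmem f1 f2 f3 u1 hf1S2 hf2S2 hf3S1 hf1 hf12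
    have hu1f4 : u1 ∉ f4 := hnotmem f1 f2 f4 u1 hf1S2 hf2S2 hf4S1 hf1 hf12
    have hu2f3 : u2 ∉ f3 := hnotmem f2 f1 f3 u2 hf2S2 hf1S2 hf3S1 hf2 hf12.symm
    -- no edge u1-u2
    have hN1 : ¬ G.Adj u1 u2 := by
      intro h
      have hne : s(u1, u2) ≠ s(a, b) := by
        intro hcon
        have : a ∈ s(u1, u2) := hcon ▸ (Sym2.mem_mk_left a b)
        rcases Sym2.mem_iff.mp this with h' | h'
        · exact hu1a h'.symm
        · exact hu2a h'.symm
      have hadj' : G'.Adj u1 u2 := by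
        rw [hG', SimpleGraph.deleteEdges_adj]
        exact ⟨h, by simpa using hne⟩
      refine hB.2 f1 hf1S2.1 f2 hf2S2.1 hf12 ⟨u1, u2, ?_, ?_, hadj', ?_, ?_⟩
      · rw [hf1]; simp
      · rw [hf2]; simp
      · intro hcon
        have : u2 ∈ f1 := hcon ▸ (Sym2.mem_mk_right u1 u2)
        rw [hf1, Sym2.mem_iff] at this
        rcases this with h' | h'
        · exact hu2a h'
        · exact hu12 h'.symm
      · intro hcon
        have : u1 ∈ f2 := hcon ▸ (Sym2.mem_mk_left u1 u2)
        rw [hf2, Sym2.mem_iff] at this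
        rcases this with h' | h'
        · exact hu1a h'
        · exact hu12 h'
    -- no edge u1-b, u2-b
    have hN2 : ∀ (fA : Sym2 V) (u : V), fA ∈ S2 → fA = s(a, u) → u ≠ a → u ≠ b → u ∉ f3 →
        ¬ G.Adj u b := by
      intro fA u hA hfA hua hub huf3 h
      have hne : s(u, b) ≠ s(a, b) := by
        intro hcon
        have : a ∈ s(u, b) := hcon ▸ (Sym2.mem_mk_left a b)
        rcases Sym2.mem_iff.mp this with h' | h'
        · exact hua h'.symm
        · exact he.ne h'
      have hadj' : G'.Adj u b := by
        rw [hG', SimpleGraph.deleteEdges_adj]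
        exact ⟨h, by simpa using hne⟩
      refine hB.2 fA hA.1 f3 hf3S1.1 (hdisj' _ hf3S1 _ hA).symm
        ⟨u, b, ?_, hbS1 _ hf3S1, hadj', ?_, ?_⟩
      · rw [hfA]; simp
      · intro hcon
        have : b ∈ fA := hcon ▸ (Sym2.mem_mk_right u b)
        exact hA.2 this
      · intro hcon
        exact huf3 (hcon ▸ (Sym2.mem_mk_left u b))
    have hN2' : ¬ G.Adj u1 b := hN2 f1 u1 hf1S2 hf1 hu1a hu1b hu1f3
    have hN2'' : ¬ G.Adj u2 b := hN2 f2 u2 hf2S2 hf2 hu2a hu2b hu2f3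
    -- the 3-element EOP of G
    subst hf1
    subst hf2
    set C : Set (Sym2 V) := {s(a, u1), s(a, u2), s(a, b)} with hCdef
    have hCeop : IsEOP G C := by
      constructor
      · intro f hf
        rcases hf with rfl | rfl | rfl
        · exact (hBE _ hf1S2.1).1
        · exact (hBE _ hf2S2.1).1
        · exact (SimpleGraph.mem_edgeSet G).mpr he
      · rintro g1 hg1 g2 hg2 hne ⟨x, y, hx, hy, hadj, hne1, hne2⟩
        rcases hg1 with rfl | rfl | rfl <;> rcases hg2 with rfl | rfl | rfl <;>
          rcases Sym2.mem_iff.mp hx with rfl | rfl <;>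
          rcases Sym2.mem_iff.mp hy with rfl | rfl <;>
          first
            | exact G.irrefl hadj
            | exact hne1 rfl
            | exact hne2 rfl
            | exact hne1 Sym2.eq_swap
            | exact hne2 Sym2.eq_swap
            | exact hN1 hadj
            | exact hN1 hadj.symm
            | exact hN2' hadj
            | exact hN2' hadj.symm
            | exact hN2'' hadj
            | exact hN2'' hadj.symm
            | exact hne rfl
    have hC3 : C.ncard = 3 := by
      have h1 : s(a, u1) ≠ s(a, u2) := hf12
      have h2' : s(a, u1) ≠ s(a, b) := (hBE _ hf1S2.1).2
      have h3 : s(a, u2) ≠ s(a, b) := (hBE _ hf2S2.1).2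
      rw [hCdef]
      rw [Set.ncard_insert_of_notMem (by simp [h1, h2']),
        Set.ncard_insert_of_notMem (by simp [h3]), Set.ncard_singleton]
    have := hle2 C hCeop
    omega
end

section
/- Let G be a finite simple graph with vertex set {v_1, ..., v_n}, and let G' be the graph obtained from G by adding, for each i with 1 <= i <= n, three new vertices x_i, z_i, y_i together with the edges x_i z_i, z_i y_i, and z_i v_i (so each vertex v_i receives a pendant path structure in which z_i is adjacent to v_i and to the two new leaves x_i and y_i). Then rho_e^o(G') = 2n + alpha(G). -/
open scoped Classical

variable {V : Type*}

/-- The independence number of `G`. -/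
noncomputable def indepNum (G : SimpleGraph V) : ℕ :=
  sSup {n | ∃ I : Set V, (∀ a ∈ I, ∀ b ∈ I, ¬ G.Adj a b) ∧ I.ncard = n}

/-- The graph `G'` obtained from `G` by adding, for every vertex `v`, three new vertices
`x_v = Sum.inr (v, 0)`, `z_v = Sum.inr (v, 1)`, `y_v = Sum.inr (v, 2)` together with the
edges `x_v z_v`, `z_v y_v` and `z_v v`. -/
def primeGraph (G : SimpleGraph V) : SimpleGraph (V ⊕ (V × Fin 3)) where
  Adj x y := x ≠ y ∧
    ((∃ a b : V, x = Sum.inl a ∧ y = Sum.inl b ∧ G.Adj a b) ∨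
     (∃ a : V, (x = Sum.inl a ∧ y = Sum.inr (a, 1)) ∨ (y = Sum.inl a ∧ x = Sum.inr (a, 1))) ∨
     (∃ a : V, (x = Sum.inr (a, 1) ∧ (y = Sum.inr (a, 0) ∨ y = Sum.inr (a, 2))) ∨
               (y = Sum.inr (a, 1) ∧ (x = Sum.inr (a, 0) ∨ x = Sum.inr (a, 2)))))
  symm := ⟨by
    rintro x y ⟨hne, (⟨a, b, rfl, rfl, h⟩ | ⟨a, h⟩ | ⟨a, h⟩)⟩
    · exact ⟨hne.symm, Or.inl ⟨b, a, rfl, rfl, h.symm⟩⟩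
    · exact ⟨hne.symm, Or.inr (Or.inl ⟨a, h.symm⟩)⟩
    · exact ⟨hne.symm, Or.inr (Or.inr ⟨a, h.symm⟩)⟩⟩
  loopless := ⟨fun x h => h.1 rfl⟩

/-!
An EOP set `B` of `G'` consists of edges of `G`, spokes `v_a z_a` and pendant edges `z_a x_a`,
`z_a y_a`. The spokes in `B` lie over an independent set of `G`, so there are at most `α(G)` of
them. If `v_a` is covered by an edge of `G` in `B`, the spoke `v_a z_a` is a common edge of that
edge and either pendant edge at `a`, so `B` contains no pendant edge at such an `a`; and every
edge of `B` has an endpoint lying on no other edge of `B`, so the edges of `G` in `B` are at most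
as many as the vertices they cover. With `T` the set of those vertices,
`|B| ≤ |T| + α(G) + 2(n - |T|)`. Conversely, all `2n` pendant edges together with the spokes
over a maximum independent set form an EOP set.
-/

section IndepNum

variable [Finite V] (G : SimpleGraph V)

lemma bddAbove_indep_ncard :
    BddAbove {n | ∃ I : Set V, (∀ a ∈ I, ∀ b ∈ I, ¬ G.Adj a b) ∧ I.ncard = n} :=
  ⟨Nat.card V, by rintro _ ⟨I, -, rfl⟩; exact Set.ncard_le_card I⟩

lemma ncard_le_indepNum {I : Set V} (hI : ∀ a ∈ I, ∀ b ∈ I, ¬ G.Adj a b) :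
    I.ncard ≤ indepNum G :=
  le_csSup (bddAbove_indep_ncard G) ⟨I, hI, rfl⟩

lemma exists_ncard_eq_indepNum :
    ∃ I : Set V, (∀ a ∈ I, ∀ b ∈ I, ¬ G.Adj a b) ∧ I.ncard = indepNum G :=
  Nat.sSup_mem (s := {n | ∃ I : Set V, (∀ a ∈ I, ∀ b ∈ I, ¬ G.Adj a b) ∧ I.ncard = n})
    ⟨0, ∅, by simp⟩ (bddAbove_indep_ncard G)

end IndepNum

namespace IsEOP

variable {G : SimpleGraph V} {B : Set (Sym2 V)}

lemma eq_or_eq_of_adj (hB : IsEOP G B) {e₁ e₂ : Sym2 V} (h₁ : e₁ ∈ B) (h₂ : e₂ ∈ B)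
    {x y : V} (hx : x ∈ e₁) (hy : y ∈ e₂) (hxy : G.Adj x y) :
    e₁ = e₂ ∨ s(x, y) = e₁ ∨ s(x, y) = e₂ := by
  by_contra! h
  exact hB.2 e₁ h₁ e₂ h₂ h.1 ⟨x, y, hx, hy, hxy, h.2⟩

/-- Two further edges of `B` at both ends of `s(u, v)` would have `s(u, v)` as a common edge. -/
lemma forall_mem_eq_or_forall_mem_eq (hB : IsEOP G B) {u v : V} (h : s(u, v) ∈ B) :
    (∀ e ∈ B, u ∈ e → e = s(u, v)) ∨ (∀ e ∈ B, v ∈ e → e = s(u, v)) := by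
  by_contra! ⟨⟨e₁, h₁, hu, hne₁⟩, ⟨e₂, h₂, hv, hne₂⟩⟩
  have huv : G.Adj u v := hB.1 h
  rcases hB.eq_or_eq_of_adj h₁ h₂ hu hv huv with rfl | h | h
  · exact hne₁ ((Sym2.mem_and_mem_iff huv.ne).1 ⟨hu, hv⟩)
  · exact hne₁ h.symm
  · exact hne₂ h.symm

end IsEOP

namespace primeGraph

variable {G : SimpleGraph V}

@[simp] lemma adj_inl_inl {a b : V} : (primeGraph G).Adj (.inl a) (.inl b) ↔ G.Adj a b := by
  simpa [primeGraph] using G.ne_of_adj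

@[simp] lemma adj_inl_inr {a b : V} {i : Fin 3} :
    (primeGraph G).Adj (.inl a) (.inr (b, i)) ↔ b = a ∧ i = 1 := by
  simp [primeGraph]

@[simp] lemma adj_inr_inl {a b : V} {i : Fin 3} :
    (primeGraph G).Adj (.inr (b, i)) (.inl a) ↔ b = a ∧ i = 1 := by
  rw [SimpleGraph.adj_comm, adj_inl_inr]

@[simp] lemma adj_inr_inr {a b : V} {i j : Fin 3} :
    (primeGraph G).Adj (.inr (a, i)) (.inr (b, j)) ↔
      a = b ∧ (i = 1 ∧ j ≠ 1 ∨ i ≠ 1 ∧ j = 1) := by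
  simp only [primeGraph]
  grind

def spoke (a : V) : Sym2 (V ⊕ (V × Fin 3)) := s(.inl a, .inr (a, 1))

/-- A pendant edge of `primeGraph G` only when `i ≠ 1`: `pendant (a, 1)` is a loop. -/
def pendant (p : V × Fin 3) : Sym2 (V ⊕ (V × Fin 3)) := s(.inr (p.1, 1), .inr p)

lemma spoke_injective : Function.Injective (spoke (V := V)) := by
  intro a b h
  simpa [spoke] using h

lemma pendant_injective : Function.Injective (pendant (V := V)) := by
  rintro ⟨a, i⟩ ⟨b, j⟩ h
  simp only [pendant, Sym2.eq_iff, Sum.inr.injEq, Prod.mk.injEq] at h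
  grind

lemma mem_edgeSet {e : Sym2 (V ⊕ (V × Fin 3))} :
    e ∈ (primeGraph G).edgeSet ↔ (∃ a b, G.Adj a b ∧ e = s(.inl a, .inl b)) ∨
      (∃ a, e = spoke a) ∨ ∃ p ∈ (Set.univ ×ˢ {1}ᶜ : Set (V × Fin 3)), e = pendant p := by
  induction e using Sym2.ind with
  | _ x y =>
    rcases x with a | ⟨a, i⟩ <;> rcases y with b | ⟨b, j⟩ <;> simp [spoke, pendant]
    · refine ⟨fun h ↦ ⟨a, b, h, .inl ⟨rfl, rfl⟩⟩, ?_⟩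
      rintro ⟨_, _, h, ⟨rfl, rfl⟩ | ⟨rfl, rfl⟩⟩ <;> simp_all [G.adj_comm]
    · constructor
      · rintro ⟨rfl, ⟨rfl, hj⟩ | ⟨hi, rfl⟩⟩
        exacts [⟨a, j, hj, .inl ⟨⟨rfl, rfl⟩, rfl, rfl⟩⟩, ⟨a, i, hi, .inr ⟨⟨rfl, rfl⟩, rfl, rfl⟩⟩]
      · rintro ⟨c, k, hk, ⟨⟨rfl, rfl⟩, rfl, rfl⟩ | ⟨⟨rfl, rfl⟩, rfl, rfl⟩⟩
        exacts [⟨rfl, .inl ⟨rfl, hk⟩⟩, ⟨rfl, .inr ⟨hk, rfl⟩⟩]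

lemma ncard_compl_one : ({1}ᶜ : Set (Fin 3)).ncard = 2 := by
  rw [Set.ncard_compl, Set.ncard_singleton, Nat.card_eq_fintype_card, Fintype.card_fin]

def extremalSet (I : Set V) : Set (Sym2 (V ⊕ (V × Fin 3))) :=
  spoke '' I ∪ pendant '' (Set.univ ×ˢ {1}ᶜ)

lemma isEOP_extremalSet {I : Set V} (hI : ∀ a ∈ I, ∀ b ∈ I, ¬ G.Adj a b) :
    IsEOP (primeGraph G) (extremalSet I) := by
  refine ⟨fun e he ↦ mem_edgeSet.2 ?_, ?_⟩
  · rcases he with ⟨a, -, rfl⟩ | ⟨p, hp, rfl⟩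
    exacts [.inr (.inl ⟨a, rfl⟩), .inr (.inr ⟨p, hp, rfl⟩)]
  · rintro _ (⟨a, ha, rfl⟩ | ⟨⟨a, i⟩, hi, rfl⟩) _ (⟨b, hb, rfl⟩ | ⟨⟨b, j⟩, hj, rfl⟩) hne
      ⟨x, y, hx, hy, hxy, hx', hy'⟩ <;>
    simp only [spoke, pendant, Sym2.mem_iff] at hx hy <;>
    rcases hx with rfl | rfl <;> rcases hy with rfl | rfl <;>
    simp_all [spoke, pendant]

lemma ncard_extremalSet [Finite V] (I : Set V) :
    (extremalSet I).ncard = 2 * Nat.card V + I.ncard := by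
  have hdisj : Disjoint (spoke '' I) (pendant '' (Set.univ ×ˢ {1}ᶜ)) := by
    simp [Set.disjoint_left, spoke, pendant]
  rw [extremalSet, Set.ncard_union_eq hdisj, Set.ncard_image_of_injective _ spoke_injective,
    Set.ncard_image_of_injective _ pendant_injective, Set.ncard_prod, Set.ncard_univ,
    ncard_compl_one]
  ring

def baseEdges (B : Set (Sym2 (V ⊕ (V × Fin 3)))) : Set (Sym2 (V ⊕ (V × Fin 3))) :=
  {e ∈ B | ∃ a b : V, e = s(.inl a, .inl b)}

def baseVerts (B : Set (Sym2 (V ⊕ (V × Fin 3)))) : Set V := {a | ∃ b, s(.inl a, .inl b) ∈ B}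

def spokeVerts (B : Set (Sym2 (V ⊕ (V × Fin 3)))) : Set V := {a | spoke a ∈ B}

variable {B : Set (Sym2 (V ⊕ (V × Fin 3)))}

/-- The spoke at `a` would be a common edge of `pendant (a, i)` and the edge of `G` at `a`. -/
lemma pendant_not_mem (hB : IsEOP (primeGraph G) B) {a : V} (ha : a ∈ baseVerts B)
    (i : Fin 3) : pendant (a, i) ∉ B := by
  obtain ⟨b, hab⟩ := ha
  intro hp
  have := hB.eq_or_eq_of_adj hp hab (x := .inr (a, 1)) (y := .inl a) (by simp [pendant])
    (by simp) (by simp)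
  simp [pendant] at this

lemma spokeVerts_indep (hB : IsEOP (primeGraph G) B) :
    ∀ a ∈ spokeVerts B, ∀ b ∈ spokeVerts B, ¬ G.Adj a b := by
  intro a ha b hb hab
  have := hB.eq_or_eq_of_adj ha hb (x := .inl a) (y := .inl b) (by simp [spoke]) (by simp [spoke])
    (by simpa using hab)
  simp [spoke, hab.ne] at this

lemma subset_baseEdges_union (hB : IsEOP (primeGraph G) B) :
    B ⊆ baseEdges B ∪ spoke '' spokeVerts B ∪ pendant '' ((baseVerts B)ᶜ ×ˢ {1}ᶜ) := by
  intro e he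
  rcases mem_edgeSet.1 (hB.1 he) with ⟨a, b, -, rfl⟩ | ⟨a, rfl⟩ | ⟨⟨a, i⟩, hi, rfl⟩
  · exact .inl (.inl ⟨he, a, b, rfl⟩)
  · exact .inl (.inr ⟨a, he, rfl⟩)
  · exact .inr ⟨(a, i), ⟨fun ha ↦ pendant_not_mem hB ha i he, hi.2⟩, rfl⟩

lemma ncard_baseEdges_le [Finite V] (hB : IsEOP (primeGraph G) B) :
    (baseEdges B).ncard ≤ (baseVerts B).ncard := by
  have key : ∀ e : baseEdges B, ∃ a : baseVerts B,
      Sum.inl a.1 ∈ e.1 ∧ ∀ e' ∈ B, Sum.inl a.1 ∈ e' → e' = e := by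
    rintro ⟨_, he, a, b, rfl⟩
    rcases hB.forall_mem_eq_or_forall_mem_eq he with h | h
    · exact ⟨⟨a, b, he⟩, by simp, h⟩
    · exact ⟨⟨b, a, Sym2.eq_swap ▸ he⟩, by simp, fun e' he' hb ↦ h e' he' hb⟩
  choose f hf using key
  refine Nat.card_le_card_of_injective f fun e₁ e₂ h ↦ Subtype.ext ?_
  exact (hf e₂).2 e₁ e₁.2.1 (h ▸ (hf e₁).1)

lemma ncard_le_of_isEOP [Finite V] (hB : IsEOP (primeGraph G) B) :
    B.ncard ≤ 2 * Nat.card V + indepNum G := by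
  have hT := Set.ncard_add_ncard_compl (baseVerts B)
  have hS := ncard_le_indepNum G (spokeVerts_indep hB)
  have hE := ncard_baseEdges_le hB
  have hP : (pendant '' ((baseVerts B)ᶜ ×ˢ {1}ᶜ)).ncard ≤ (baseVerts B)ᶜ.ncard * 2 := by
    rw [Set.ncard_image_of_injective _ pendant_injective, Set.ncard_prod, ncard_compl_one]
  calc B.ncard
      ≤ (baseEdges B ∪ spoke '' spokeVerts B ∪ pendant '' ((baseVerts B)ᶜ ×ˢ {1}ᶜ)).ncard :=
        Set.ncard_le_ncard (subset_baseEdges_union hB)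
    _ ≤ (baseEdges B).ncard + (spoke '' spokeVerts B).ncard +
          (pendant '' ((baseVerts B)ᶜ ×ˢ {1}ᶜ)).ncard :=
        (Set.ncard_union_le _ _).trans (by gcongr; exact Set.ncard_union_le _ _)
    _ ≤ 2 * Nat.card V + indepNum G := by
        rw [Set.ncard_image_of_injective _ spoke_injective]
        omega

end primeGraph

/-- With `n = |V(G)|`, the graph `G'` obtained from `G` by attaching to each vertex `v_i` the
path gadget `x_i z_i y_i` with the extra edge `z_i v_i` satisfies `ρₑᵒ(G') = 2n + α(G)`. -/
theorem stmt13 [Fintype V] (G : SimpleGraph V) (n : ℕ) (hn : n = Fintype.card V) :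
    eopNum (primeGraph G) = 2 * n + indepNum G := by
  rw [hn, ← Nat.card_eq_fintype_card]
  refine IsGreatest.csSup_eq ⟨?_, ?_⟩
  · obtain ⟨I, hI, hcard⟩ := exists_ncard_eq_indepNum G
    exact ⟨primeGraph.extremalSet I, primeGraph.isEOP_extremalSet hI,
      by rw [primeGraph.ncard_extremalSet, hcard]⟩
  · rintro _ ⟨B, hB, rfl⟩
    exact primeGraph.ncard_le_of_isEOP hB
end
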